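/- If χ²_{(n)} is a chi-squared random variable with n degrees of freedom, then for every ε with 0 ≤ ε < 1/2, P{χ²_{(n)} ≥ n(1 + ε)} ≤ exp(−3n ε² / 16). -/

import Mathlib

/-!
Chernoff's bound with the moment generating function `E e^{tχ²_{(n)}} = (1 - 2t)^{-n/2}`,
taken at its optimal point `t = ε / (2(1 + ε))`, gives
`P{χ²_{(n)} ≥ n(1 + ε)} ≤ exp(-(n/2)(ε - log(1 + ε)))`. For `0 ≤ ε ≤ 1/2` the Padé-type bound
`log(1 + ε) ≤ ε(6 + ε)/(6 + 4ε)` yields `ε - log(1 + ε) ≥ 3ε²/(6 + 4ε) ≥ 3ε²/8`.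
-/

open MeasureTheory ProbabilityTheory

noncomputable section

/-- The chi-squared distribution with `n` degrees of freedom: the law of
`z₁² + ⋯ + z_n²` for i.i.d. standard normal `z_i`. -/
def chiSqMeasure (n : ℕ) : Measure ℝ :=
  Measure.map (fun x : Fin n → ℝ => ∑ i, (x i) ^ 2)
    (Measure.pi fun _ : Fin n => gaussianReal 0 1)

open Real

theorem hasDerivAt_mul_div_sub_log_one_add {x : ℝ} (hx : 0 ≤ x) :
    HasDerivAt (fun y ↦ y * (6 + y) / (6 + 4 * y) - log (1 + y))
      (x ^ 3 / ((1 + x) * (3 + 2 * x) ^ 2)) x := by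
  have h1 : 1 + x ≠ 0 := by positivity
  have h2 : 6 + 4 * x ≠ 0 := by positivity
  have h := (((hasDerivAt_id' x).mul ((hasDerivAt_id' x).const_add 6)).div
    (((hasDerivAt_id' x).const_mul 4).const_add 6) h2).sub
    (((hasDerivAt_id' x).const_add 1).log h1)
  refine h.congr_deriv ?_
  simp only [Pi.mul_apply]
  field_simp
  ring

theorem log_one_add_le_mul_div {x : ℝ} (hx : 0 ≤ x) :
    log (1 + x) ≤ x * (6 + x) / (6 + 4 * x) := by
  have hmono : MonotoneOn (fun y ↦ y * (6 + y) / (6 + 4 * y) - log (1 + y)) (Set.Ici 0) := by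
    refine monotoneOn_of_hasDerivWithinAt_nonneg (convex_Ici 0)
      (fun y hy ↦ (hasDerivAt_mul_div_sub_log_one_add hy).continuousAt.continuousWithinAt)
      (fun y hy ↦ (hasDerivAt_mul_div_sub_log_one_add (interior_subset hy)).hasDerivWithinAt)
      (fun y hy ↦ ?_)
    have : 0 ≤ y := interior_subset hy
    positivity
  have := hmono Set.self_mem_Ici hx hx
  simp only [mul_zero, add_zero, log_one, sub_zero] at this
  linarith

theorem three_mul_sq_div_eight_le_sub_log_one_add {ε : ℝ} (h0 : 0 ≤ ε) (h1 : ε ≤ 1 / 2) :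
    3 * ε ^ 2 / 8 ≤ ε - log (1 + ε) := by
  have hsub : ε - ε * (6 + ε) / (6 + 4 * ε) = 3 * ε ^ 2 / (6 + 4 * ε) := by
    field_simp
    ring
  calc 3 * ε ^ 2 / 8 ≤ 3 * ε ^ 2 / (6 + 4 * ε) := by gcongr; linarith
    _ = ε - ε * (6 + ε) / (6 + 4 * ε) := hsub.symm
    _ ≤ ε - log (1 + ε) := by linarith [log_one_add_le_mul_div h0]

theorem integral_exp_mul_sq_gaussianReal {t : ℝ} (ht : t < 1 / 2) :
    ∫ x, exp (t * x ^ 2) ∂gaussianReal 0 1 = (1 - 2 * t) ^ (-(1 / 2 : ℝ)) := by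
  have hpdf (x : ℝ) : gaussianPDFReal 0 1 x • exp (t * x ^ 2) =
      (√(2 * π))⁻¹ * exp (-(1 / 2 - t) * x ^ 2) := by
    rw [gaussianPDFReal, smul_eq_mul, mul_assoc, ← exp_add]
    congr 2 <;> simp only [NNReal.coe_one, mul_one, sub_zero]
    ring
  have h2t : 0 < 1 - 2 * t := by linarith
  rw [integral_gaussianReal_eq_integral_smul one_ne_zero]
  simp_rw [hpdf, integral_const_mul, integral_gaussian]
  rw [← sqrt_inv, ← sqrt_mul (by positivity), sqrt_eq_rpow, rpow_neg h2t.le, ← inv_rpow h2t.le]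
  congr 1
  field_simp

instance (n : ℕ) : IsProbabilityMeasure (chiSqMeasure n) :=
  Measure.isProbabilityMeasure_map
    (by fun_prop : Measurable fun x : Fin n → ℝ ↦ ∑ i, x i ^ 2).aemeasurable

theorem mgf_chiSqMeasure (n : ℕ) {t : ℝ} (ht : t < 1 / 2) :
    mgf id (chiSqMeasure n) t = (1 - 2 * t) ^ (-(n : ℝ) / 2) := by
  rw [chiSqMeasure, mgf_id_map
    (by fun_prop : Measurable fun x : Fin n → ℝ ↦ ∑ i, x i ^ 2).aemeasurable, mgf]
  simp_rw [Finset.mul_sum, exp_sum]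
  rw [integral_fintype_prod_eq_pow (fun x ↦ exp (t * x ^ 2)), integral_exp_mul_sq_gaussianReal ht,
    Fintype.card_fin, ← rpow_mul_natCast (by linarith)]
  ring_nf

theorem integrable_exp_mul_chiSqMeasure (n : ℕ) {t : ℝ} (ht : t < 1 / 2) :
    Integrable (fun x ↦ exp (t * x)) (chiSqMeasure n) := by
  refine Integrable.of_integral_ne_zero ?_
  change mgf id (chiSqMeasure n) t ≠ 0
  have h2t : 0 < 1 - 2 * t := by linarith
  rw [mgf_chiSqMeasure n ht]
  positivity

theorem chiSqMeasure_real_le_exp_mul_rpow (n : ℕ) (a : ℝ) {t : ℝ} (ht0 : 0 ≤ t) (ht : t < 1 / 2) :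
    (chiSqMeasure n).real {x | a ≤ x} ≤ exp (-t * a) * (1 - 2 * t) ^ (-(n : ℝ) / 2) := by
  rw [← mgf_chiSqMeasure n ht]
  exact measure_ge_le_exp_mul_mgf a ht0 (integrable_exp_mul_chiSqMeasure n ht)

theorem chiSqMeasure_real_le_exp_sub_log (n : ℕ) {ε : ℝ} (hε : 0 ≤ ε) :
    (chiSqMeasure n).real {x | n * (1 + ε) ≤ x} ≤ exp (-(n / 2) * (ε - log (1 + ε))) := by
  have h1ε : 0 < 1 + ε := by linarith
  -- the minimiser of `t ↦ -t n (1 + ε) - (n/2) log(1 - 2t)`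
  set t := ε / (2 * (1 + ε)) with ht_def
  have ht : t < 1 / 2 := by
    rw [div_lt_iff₀ (by positivity)]
    linarith
  have h2t : 1 - 2 * t = (1 + ε)⁻¹ := by
    rw [ht_def]
    field_simp
    ring
  calc _ ≤ exp (-t * (n * (1 + ε))) * (1 - 2 * t) ^ (-(n : ℝ) / 2) :=
        chiSqMeasure_real_le_exp_mul_rpow n _ (by positivity) ht
    _ = exp (-(n / 2) * (ε - log (1 + ε))) := by
      rw [h2t, inv_rpow h1ε.le, ← rpow_neg h1ε.le, rpow_def_of_pos h1ε, ← exp_add]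
      congr 1
      rw [ht_def]
      field_simp
      ring

theorem chiSq_upper_tail (n : ℕ) (ε : ℝ) (hε0 : 0 ≤ ε) (hε1 : ε < 1 / 2) :
    chiSqMeasure n {x : ℝ | (n : ℝ) * (1 + ε) ≤ x} ≤
      ENNReal.ofReal (Real.exp (-3 * (n : ℝ) * ε ^ 2 / 16)) := by
  rw [← ofReal_measureReal (measure_ne_top _ _)]
  refine ENNReal.ofReal_le_ofReal ((chiSqMeasure_real_le_exp_sub_log n hε0).trans ?_)
  rw [exp_le_exp]
  have hn : (0 : ℝ) ≤ n / 2 := by positivity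
  have := mul_le_mul_of_nonneg_left (three_mul_sq_div_eight_le_sub_log_one_add hε0 hε1.le) hn
  linarith

end
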